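/- arXiv:1301.7345 — 5 statements merged into one kernel-verified Lean document; each statement's English description precedes it below -/
import Mathlib

section
/- (Sphere-packing bound for constant weight codes) Let C be a family of k-subsets of an n-set such that any two distinct members have symmetric difference at least 2(2t+1) (i.e., minimum Johnson distance greater than 4t). Then |C| ≤ C(n,k) / (Σ_{i=0}^{t} C(k,i)·C(n−k,i)), provided t ≤ k and t ≤ n−k. -/
/-!
Around each codeword `s` take the ball of `k`-subsets of `P` within symmetric difference `2t`.
By the triangle inequality the balls around distinct codewords are disjoint, and all of them lie
among the `C(n,k)` subsets of size `k`. Each ball has at least `∑_{i ≤ t} C(k,i) C(n-k,i)`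
elements: trading `i` elements of `s` for `i` elements of `P \ s` gives a `k`-set at distance
`2i`, and the traded sets can be read off the result, so distinct trades give distinct sets.
-/

open Finset

namespace Finset

variable {α : Type*} [DecidableEq α]

theorem card_symmDiff (s t : Finset α) : #(symmDiff s t) = #(s \ t) + #(t \ s) := by
  rw [symmDiff_def, sup_eq_union, card_union_of_disjoint disjoint_sdiff_sdiff]

theorem card_symmDiff_le_add (s t u : Finset α) :
    #(symmDiff s u) ≤ #(symmDiff s t) + #(symmDiff t u) :=
  (card_le_card (symmDiff_triangle s t u)).trans (card_union_le _ _)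

theorem sdiff_sdiff_union_of_subset {s A B : Finset α} (hA : A ⊆ s) (hB : Disjoint B s) :
    s \ (s \ A ∪ B) = A := by
  ext a
  have := @hA a
  have : a ∈ B → a ∉ s := fun h => disjoint_left.1 hB h
  simp only [mem_sdiff, mem_union]
  tauto

theorem sdiff_union_sdiff_of_disjoint {s : Finset α} (A : Finset α) {B : Finset α}
    (hB : Disjoint B s) : (s \ A ∪ B) \ s = B := by
  rw [union_sdiff_distrib, hB.sdiff_eq_left]
  simp

theorem card_sdiff_union_of_subset {s A B : Finset α} (hA : A ⊆ s) (hB : Disjoint B s) :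
    #(s \ A ∪ B) = #s - #A + #B := by
  rw [card_union_of_disjoint (disjoint_of_subset_left sdiff_subset hB.symm),
    card_sdiff_of_subset hA]

theorem card_symmDiff_sdiff_union {s A B : Finset α} (hA : A ⊆ s) (hB : Disjoint B s) :
    #(symmDiff s (s \ A ∪ B)) = #A + #B := by
  rw [card_symmDiff, sdiff_sdiff_union_of_subset hA hB, sdiff_union_sdiff_of_disjoint A hB]

theorem injOn_sdiff_union (s : Finset α) :
    Set.InjOn (fun p : Finset α × Finset α => s \ p.1 ∪ p.2) {p | p.1 ⊆ s ∧ Disjoint p.2 s} := by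
  rintro ⟨A, B⟩ ⟨hA, hB⟩ ⟨A', B'⟩ ⟨hA', hB'⟩ h
  dsimp only at hA hB hA' hB' h
  have hfst := congrArg (s \ ·) h
  have hsnd := congrArg (· \ s) h
  rw [sdiff_sdiff_union_of_subset hA hB, sdiff_sdiff_union_of_subset hA' hB'] at hfst
  rw [sdiff_union_sdiff_of_disjoint A hB, sdiff_union_sdiff_of_disjoint A' hB'] at hsnd
  rw [hfst, hsnd]

theorem card_mul_le_card_of_pairwiseDisjoint {ι β : Type*} [DecidableEq β] {C : Finset ι}
    {f : ι → Finset β} {U : Finset β} {m : ℕ} (hdisj : (C : Set ι).PairwiseDisjoint f) (hU : ∀ i ∈ C, f i ⊆ U)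
    (hm : ∀ i ∈ C, m ≤ #(f i)) : #C * m ≤ #U :=
  calc #C * m = ∑ _i ∈ C, m := by rw [sum_const, smul_eq_mul]
    _ ≤ ∑ i ∈ C, #(f i) := sum_le_sum hm
    _ = #(C.biUnion f) := (card_biUnion hdisj).symm
    _ ≤ #U := card_le_card (biUnion_subset.2 hU)

end Finset

section JohnsonBall

variable {α : Type*} [DecidableEq α]

def johnsonBall (P : Finset α) (k r : ℕ) (s : Finset α) : Finset (Finset α) :=
  {x ∈ P.powersetCard k | #(symmDiff s x) ≤ r}

theorem johnsonBall_subset (P : Finset α) (k r : ℕ) (s : Finset α) :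
    johnsonBall P k r s ⊆ P.powersetCard k :=
  filter_subset _ _

theorem disjoint_johnsonBall {P s s' : Finset α} {k r : ℕ} (h : 2 * r < #(symmDiff s s')) :
    Disjoint (johnsonBall P k r s) (johnsonBall P k r s') := by
  refine disjoint_left.2 fun x hx hx' => ?_
  have hsx := (mem_filter.1 hx).2
  have hs'x := (mem_filter.1 hx').2
  rw [symmDiff_comm] at hs'x
  have := card_symmDiff_le_add s x s'
  omega

theorem sdiff_union_mem_johnsonBall {P s A B : Finset α} {t : ℕ} (hs : s ⊆ P) (hA : A ⊆ s)
    (hBP : B ⊆ P) (hB : Disjoint B s) (hcard : #B = #A) (ht : #A ≤ t) :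
    s \ A ∪ B ∈ johnsonBall P #s (2 * t) s := by
  have := card_le_card hA
  refine mem_filter.2 ⟨mem_powersetCard.2 ⟨union_subset (sdiff_subset.trans hs) hBP, ?_⟩, ?_⟩
  · rw [card_sdiff_union_of_subset hA hB]
    omega
  · rw [card_symmDiff_sdiff_union hA hB]
    omega

theorem sum_choose_mul_choose_le_card_johnsonBall {P s : Finset α} (hs : s ⊆ P) (t : ℕ) :
    ∑ i ∈ range (t + 1), (#s).choose i * (#(P \ s)).choose i ≤
      #(johnsonBall P #s (2 * t) s) := by
  calc ∑ i ∈ range (t + 1), (#s).choose i * (#(P \ s)).choose i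
      = #((range (t + 1)).sigma fun i => s.powersetCard i ×ˢ (P \ s).powersetCard i) := by
        simp only [card_sigma, card_product, card_powersetCard]
    _ ≤ #(johnsonBall P #s (2 * t) s) := by
        refine card_le_card_of_injOn (fun p => s \ p.2.1 ∪ p.2.2) ?_ ?_
        · rintro ⟨i, A, B⟩ hAB
          simp only [coe_sigma, Set.mem_sigma_iff, mem_coe, mem_range, mem_product,
            mem_powersetCard, subset_sdiff] at hAB
          obtain ⟨hi, ⟨hA, rfl⟩, ⟨hBP, hB⟩, hcard⟩ := hAB
          exact sdiff_union_mem_johnsonBall hs hA hBP hB hcard (Nat.lt_succ_iff.1 hi)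
        · rintro ⟨i, A, B⟩ hAB ⟨i', A', B'⟩ hAB' h
          simp only [coe_sigma, Set.mem_sigma_iff, mem_coe, mem_range, mem_product,
            mem_powersetCard, subset_sdiff] at hAB hAB'
          obtain ⟨-, ⟨hA, rfl⟩, ⟨-, hB⟩, -⟩ := hAB
          obtain ⟨-, ⟨hA', rfl⟩, ⟨-, hB'⟩, -⟩ := hAB'
          obtain ⟨rfl, rfl⟩ := Prod.ext_iff.1 (injOn_sdiff_union s ⟨hA, hB⟩ ⟨hA', hB'⟩ h)
          rfl

end JohnsonBall

theorem sphere_packing_bound_general {α : Type*} [DecidableEq α] (P : Finset α) (n k t : ℕ)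
    (hP : P.card = n) (C : Finset (Finset α))
    (hsub : ∀ s ∈ C, s ⊆ P) (hk : ∀ s ∈ C, s.card = k)
    (hd : ∀ s ∈ C, ∀ s' ∈ C, s ≠ s' → 2 * (2 * t + 1) ≤ (symmDiff s s').card) :
    C.card ≤ n.choose k / ∑ i ∈ Finset.range (t + 1), k.choose i * (n - k).choose i := by
  have hpos : 0 < ∑ i ∈ range (t + 1), k.choose i * (n - k).choose i := by
    rw [sum_range_succ']
    simp
  subst hP
  rw [Nat.le_div_iff_mul_le hpos, ← card_powersetCard]
  refine card_mul_le_card_of_pairwiseDisjoint (f := johnsonBall P k (2 * t))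
    (fun s hs s' hs' hne => disjoint_johnsonBall ?_) (fun s _ => johnsonBall_subset P k _ s)
    fun s hs => ?_
  · have := hd s hs s' hs' hne
    omega
  · have := sum_choose_mul_choose_le_card_johnsonBall (hsub s hs) t
    rwa [card_sdiff_of_subset (hsub s hs), hk s hs] at this

/-- Sphere-packing bound for constant weight codes: if any two distinct codewords (k-subsets
of an n-set) have symmetric difference at least `2(2t+1)`, then
`|C| ≤ C(n,k) / (∑_{i=0}^t C(k,i) C(n-k,i))`. -/
theorem sphere_packing_bound {α : Type*} [DecidableEq α] (P : Finset α) (n k t : ℕ)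
    (hP : P.card = n) (C : Finset (Finset α))
    (hsub : ∀ s ∈ C, s ⊆ P) (hk : ∀ s ∈ C, s.card = k)
    (hd : ∀ s ∈ C, ∀ s' ∈ C, s ≠ s' → 2 * (2 * t + 1) ≤ (symmDiff s s').card)
    (htk : t ≤ k) (htnk : t ≤ n - k) :
    C.card ≤ n.choose k / ∑ i ∈ Finset.range (t + 1), k.choose i * (n - k).choose i :=
  sphere_packing_bound_general P n k t hP C hsub hk hd
end

section
/- (Singleton-type bound) Let C be a family of k-subsets of an n-set with pairwise symmetric distance at least d, where d > 2 is even and k ≥ (d−2)/2 and n−k ≥ (d−2)/2. Then |C| ≤ C(n − (d−2)/2, max{k, n−k}). -/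
open Finset

section helpers
variable {α : Type*} [DecidableEq α] [LinearOrder α]

private lemma g_injOn (s : Finset α) :
    Set.InjOn (fun x => (s.filter fun y => x < y).card) s := by
  have key : ∀ x ∈ s, ∀ y ∈ s, x < y →
      (s.filter fun z => y < z).card < (s.filter fun z => x < z).card := by
    intro x hx y hy hxy
    apply Finset.card_lt_card
    constructor
    · intro z hz
      obtain ⟨hz1, hz2⟩ := Finset.mem_filter.1 hz
      exact Finset.mem_filter.2 ⟨hz1, hxy.trans hz2⟩
    · intro hsub
      have : y ∈ s.filter fun z => x < z := Finset.mem_filter.2 ⟨hy, hxy⟩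
      have := Finset.mem_filter.1 (hsub this)
      exact lt_irrefl y this.2
  intro x hx y hy hxy
  by_contra hne
  rcases lt_or_gt_of_ne hne with h | h
  · exact (key x hx y hy h).ne' hxy
  · exact (key y hy x hx h).ne hxy

private lemma image_g (s : Finset α) :
    s.image (fun x => (s.filter fun y => x < y).card) = Finset.range s.card := by
  apply Finset.eq_of_subset_of_card_le
  · intro a ha
    obtain ⟨x, hx, rfl⟩ := Finset.mem_image.1 ha
    have h1 : (s.filter fun y => x < y) ⊆ s.erase x := by
      intro z hz
      have := Finset.mem_filter.1 hz
      exact Finset.mem_erase.2 ⟨ne_of_gt this.2, this.1⟩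
    have h2 := Finset.card_le_card h1
    rw [Finset.card_erase_of_mem hx] at h2
    have : 0 < s.card := Finset.card_pos.2 ⟨x, hx⟩
    simp only [Finset.mem_range]
    omega
  · rw [Finset.card_range, Finset.card_image_of_injOn (g_injOn s)]

private lemma card_filter_lt (s : Finset α) (e : ℕ) :
    (s.filter fun x => (s.filter fun y => x < y).card < e).card = min e s.card := by
  set g : α → ℕ := fun x => (s.filter fun y => x < y).card with hg
  have h1 : (s.filter fun x => g x < e).image g = (s.image g).filter (· < e) :=
    (Finset.filter_image (f := g) (s := s) (p := (· < e))).symm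
  have h2 : ((s.filter fun x => g x < e).image g).card = (s.filter fun x => g x < e).card :=
    Finset.card_image_of_injOn ((g_injOn s).mono (by
      intro x hx; exact Finset.mem_of_mem_filter x hx))
  rw [← h2, h1, image_g]
  have : (Finset.range s.card).filter (· < e) = Finset.range (min e s.card) := by
    ext a; simp only [Finset.mem_filter, Finset.mem_range, Finset.mem_range]; omega
  rw [this, Finset.card_range]

private lemma card_filter_ge (s : Finset α) (e : ℕ) :
    (s.filter fun x => e ≤ (s.filter fun y => x < y).card).card = s.card - min e s.card := by
  have h := Finset.card_filter_add_card_filter_not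
    (s := s) (p := fun x => (s.filter fun y => x < y).card < e)
  simp only [not_lt] at h
  rw [card_filter_lt] at h
  omega

private lemma key_bound (P : Finset α) (n w e : ℕ) (hP : P.card = n) (C : Finset (Finset α))
    (hsub : ∀ s ∈ C, s ⊆ P) (hw : ∀ s ∈ C, s.card = w)
    (hew : e ≤ w) (hen : e ≤ n)
    (hdist : ∀ s ∈ C, ∀ s' ∈ C, s ≠ s' → 2 * e + 2 ≤ (symmDiff s s').card) :
    C.card ≤ (n - e).choose (w - e) := by
  set Q : Finset α := P.filter fun x => e ≤ (P.filter fun y => x < y).card with hQdef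
  have hQ : Q.card = n - e := by
    rw [hQdef, card_filter_ge, hP]; omega
  set f : Finset α → Finset α :=
    fun s => s.filter fun x => e ≤ (s.filter fun y => x < y).card with hf
  have hfcard : ∀ s ∈ C, (f s).card = w - e := by
    intro s hs
    rw [hf, card_filter_ge, hw s hs]
    omega
  have hfsub : ∀ s ∈ C, f s ⊆ Q := by
    intro s hs x hx
    have hx' := Finset.mem_filter.1 hx
    refine Finset.mem_filter.2 ⟨hsub s hs hx'.1, le_trans hx'.2 ?_⟩
    exact Finset.card_le_card (Finset.filter_subset_filter _ (hsub s hs))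
  have hmaps : ∀ s ∈ C, f s ∈ Q.powersetCard (w - e) := by
    intro s hs
    exact Finset.mem_powersetCard.2 ⟨hfsub s hs, hfcard s hs⟩
  have hinj : Set.InjOn f C := by
    intro s hs s' hs' hEq
    by_contra hne
    have h1 : f s ⊆ s ∩ s' := by
      intro x hx
      refine Finset.mem_inter.2 ⟨Finset.mem_of_mem_filter x hx, ?_⟩
      rw [hEq] at hx
      exact Finset.mem_of_mem_filter x hx
    have h2 : w - e ≤ (s ∩ s').card := by
      rw [← hfcard s hs]; exact Finset.card_le_card h1
    have h3 := hdist s hs s' hs' hne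
    have h4 : (symmDiff s s').card = (s \ s').card + (s' \ s).card := by
      rw [symmDiff_def]
      exact Finset.card_union_of_disjoint (Finset.sdiff_disjoint.mono_right Finset.sdiff_subset)
    have h5 := Finset.card_inter_add_card_sdiff s s'
    have h6 := Finset.card_inter_add_card_sdiff s' s
    rw [Finset.inter_comm] at h6
    have hws := hw s hs
    have hws' := hw s' hs'
    have hcap : (s ∩ s').card ≤ w := by
      rw [← hws]; exact Finset.card_le_card Finset.inter_subset_left
    omega
  calc C.card ≤ (Q.powersetCard (w - e)).card :=
        Finset.card_le_card_of_injOn f hmaps hinj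
    _ = (n - e).choose (w - e) := by rw [Finset.card_powersetCard, hQ]

end helpers

/-- Singleton-type bound for constant weight codes:
`|C| ≤ C(n - (d-2)/2, max k (n-k))`. -/
theorem singleton_bound {α : Type*} [DecidableEq α] (P : Finset α) (n k d : ℕ)
    (hP : P.card = n) (C : Finset (Finset α))
    (hsub : ∀ s ∈ C, s ⊆ P) (hk : ∀ s ∈ C, s.card = k)
    (hd2 : 2 < d) (hde : Even d)
    (hkd : (d - 2) / 2 ≤ k) (hnkd : (d - 2) / 2 ≤ n - k)
    (hdist : ∀ s ∈ C, ∀ s' ∈ C, s ≠ s' → d ≤ (symmDiff s s').card) :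
    C.card ≤ (n - (d - 2) / 2).choose (max k (n - k)) := by
  letI : LinearOrder α := IsWellOrder.linearOrder WellOrderingRel
  set e := (d - 2) / 2 with he
  obtain ⟨m, hm⟩ := hde
  have hde2 : d = 2 * e + 2 := by omega
  rcases C.eq_empty_or_nonempty with rfl | hCne
  · simp
  have hkn : k ≤ n := by
    obtain ⟨s, hs⟩ := hCne
    rw [← hP, ← hk s hs]; exact Finset.card_le_card (hsub s hs)
  have hdist' : ∀ s ∈ C, ∀ s' ∈ C, s ≠ s' → 2 * e + 2 ≤ (symmDiff s s').card := by
    intro s hs s' hs' hne; rw [← hde2]; exact hdist s hs s' hs' hne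
  rcases le_or_gt k (n - k) with hle | hlt
  · have hb := key_bound P n k e hP C hsub hk hkd (by omega) hdist'
    have hmax : max k (n - k) = n - k := max_eq_right hle
    rw [hmax]
    have : (n - e).choose (n - k) = (n - e).choose (k - e) := by
      have : (n - e) - (n - k) = k - e := by omega
      rw [← this, Nat.choose_symm (by omega)]
    rw [this]; exact hb
  · set C' : Finset (Finset α) := C.image (fun s => P \ s) with hC'
    have hinj : Set.InjOn (fun s => P \ s) C := by
      intro s hs s' hs' hEq
      have h1 : P \ (P \ s) = s := Finset.sdiff_sdiff_eq_self (hsub s hs)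
      have h2 : P \ (P \ s') = s' := Finset.sdiff_sdiff_eq_self (hsub s' hs')
      have hEq' : P \ s = P \ s' := hEq
      rw [← h1, ← h2, hEq']
    have hcard : C'.card = C.card := Finset.card_image_of_injOn hinj
    have hsymm : ∀ s ∈ C, ∀ s' ∈ C, symmDiff (P \ s) (P \ s') = symmDiff s s' := by
      intro s hs s' hs'
      ext x
      have h1 : x ∈ s → x ∈ P := fun h => hsub s hs h
      have h2 : x ∈ s' → x ∈ P := fun h => hsub s' hs' h
      simp only [Finset.mem_symmDiff, Finset.mem_sdiff]
      tauto
    have hb := key_bound P n (n - k) e hP C'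
      (by rintro t ht; obtain ⟨s, hs, rfl⟩ := Finset.mem_image.1 ht; exact Finset.sdiff_subset)
      (by rintro t ht; obtain ⟨s, hs, rfl⟩ := Finset.mem_image.1 ht
          rw [Finset.card_sdiff_of_subset (hsub s hs), hP, hk s hs])
      hnkd (by omega)
      (by rintro t ht t' ht' hne
          obtain ⟨s, hs, rfl⟩ := Finset.mem_image.1 ht
          obtain ⟨s', hs', rfl⟩ := Finset.mem_image.1 ht'
          have hne' : s ≠ s' := fun h => hne (by rw [h])
          rw [hsymm s hs s' hs']
          exact hdist' s hs s' hs' hne')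
    rw [← hcard]
    have hmax : max k (n - k) = k := max_eq_left (le_of_lt hlt)
    rw [hmax]
    have : (n - e).choose ((n - k) - e) = (n - e).choose k := by
      have h7 : (n - e) - ((n - k) - e) = k := by omega
      rw [← Nat.choose_symm (n := n - e) (k := (n-k) - e) (by omega), h7]
    rw [← this]; exact hb
end

section
/- (Restricted Johnson bound) Let C be a family of N distinct k-subsets of an n-set such that any two distinct members have symmetric difference at least 2δ. If k² − kn + δn > 0, then N ≤ ⌊δn / (k² − kn + δn)⌋. -/
/-- Restricted Johnson bound: if `C` consists of `N` distinct `k`-subsets of an `n`-set with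
pairwise symmetric difference at least `2δ`, and `k² - kn + δn > 0`, then
`N ≤ δn / (k² - kn + δn)` (equivalently `N (k² - kn + δn) ≤ δn`). -/
theorem restricted_johnson_bound {α : Type*} [DecidableEq α] (P : Finset α) (n k δ N : ℕ)
    (hP : P.card = n) (C : Finset (Finset α)) (hN : C.card = N)
    (hsub : ∀ s ∈ C, s ⊆ P) (hk : ∀ s ∈ C, s.card = k)
    (hdist : ∀ s ∈ C, ∀ t ∈ C, s ≠ t → 2 * δ ≤ (symmDiff s t).card)
    (hpos : 0 < (k : ℤ) ^ 2 - k * n + δ * n) :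
    (N : ℤ) ≤ (δ * n) / ((k : ℤ) ^ 2 - k * n + δ * n) := by
  rw [Int.le_ediv_iff_mul_le hpos]
  -- key intersection bound
  have hinter : ∀ s ∈ C, ∀ t ∈ C, s ≠ t → δ + (s ∩ t).card ≤ k := by
    intro s hs t ht hst
    have h0 : symmDiff s t = (s ∪ t) \ (s ∩ t) := symmDiff_eq_sup_sdiff_inf s t
    have hss : s ∩ t ⊆ s ∪ t := Finset.inter_subset_union
    have h1 : (symmDiff s t).card = (s ∪ t).card - (s ∩ t).card := by
      rw [h0, Finset.card_sdiff_of_subset hss]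
    have h2 : (s ∪ t).card + (s ∩ t).card = s.card + t.card :=
      Finset.card_union_add_card_inter s t
    have h3 : (s ∩ t).card ≤ (s ∪ t).card := Finset.card_le_card hss
    have h4 := hk s hs
    have h5 := hk t ht
    have := hdist s hs t ht hst
    omega
  -- trivial cases
  rcases Nat.lt_or_ge N 2 with hN2 | hN2
  · interval_cases N
    · simp; positivity
    · obtain ⟨s, hs⟩ := Finset.card_pos.mp (by omega : 0 < C.card)
      have hkn : (k : ℤ) ≤ n := by
        exact_mod_cast (hk s hs ▸ hP ▸ Finset.card_le_card (hsub s hs))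
      have h2 : (k:ℤ)*k ≤ k*n := mul_le_mul_of_nonneg_left hkn (Int.natCast_nonneg k)
      push_cast
      nlinarith [h2]
  -- δ ≤ k since there are two distinct codewords
  have hδk : δ ≤ k := by
    obtain ⟨s, hs, t, ht, hst⟩ := Finset.one_lt_card.mp (by omega : 1 < C.card)
    have := hinter s hs t ht hst
    omega
  -- the counting function
  set f : α → ℤ := fun p => ∑ s ∈ C, if p ∈ s then (1:ℤ) else 0 with hf
  have hcount : ∀ s : Finset α, s ⊆ P → (∑ p ∈ P, if p ∈ s then (1:ℤ) else 0) = s.card := by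
    intro s hs
    rw [Finset.sum_boole, Finset.filter_mem_eq_inter, Finset.inter_eq_right.mpr hs]
  have hsum1 : ∑ p ∈ P, f p = N * k := by
    rw [Finset.sum_comm]
    rw [Finset.sum_congr rfl fun s hs => (hcount s (hsub s hs)).trans (by rw [hk s hs])]
    simp [hN, mul_comm]
  have hsum2 : ∑ p ∈ P, f p ^ 2 = ∑ s ∈ C, ∑ t ∈ C, ((s ∩ t).card : ℤ) := by
    have hpt : ∀ p, f p ^ 2 = ∑ s ∈ C, ∑ t ∈ C, (if p ∈ s ∩ t then (1:ℤ) else 0) := by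
      intro p
      rw [sq, hf, Finset.sum_mul_sum]
      refine Finset.sum_congr rfl fun s _ => Finset.sum_congr rfl fun t _ => ?_
      by_cases h1 : p ∈ s <;> by_cases h2 : p ∈ t <;> simp [h1, h2]
    rw [Finset.sum_congr rfl fun p _ => hpt p, Finset.sum_comm]
    refine Finset.sum_congr rfl fun s hs => ?_
    rw [Finset.sum_comm]
    exact Finset.sum_congr rfl fun t ht =>
      hcount (s ∩ t) ((Finset.inter_subset_left).trans (hsub s hs))
  have hCS := sq_sum_le_card_mul_sum_sq (s := P) (f := f)
  have hrow : ∀ s ∈ C, ∑ t ∈ C, ((s ∩ t).card:ℤ) ≤ k + ((N:ℤ) - 1) * (k - δ) := by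
    intro s hs
    rw [← Finset.add_sum_erase _ _ hs]
    have h1 : ((s ∩ s).card : ℤ) = k := by simp [hk s hs]
    have h2 : ∑ t ∈ C.erase s, ((s ∩ t).card:ℤ) ≤ (C.erase s).card • ((k:ℤ) - δ) := by
      apply Finset.sum_le_card_nsmul
      intro t ht
      have := hinter s hs t (Finset.mem_of_mem_erase ht) (Finset.ne_of_mem_erase ht).symm
      have : (δ:ℤ) + (s ∩ t).card ≤ k := by exact_mod_cast this
      linarith
    have h3 : ((C.erase s).card : ℤ) = (N:ℤ) - 1 := by
      rw [Finset.card_erase_of_mem hs, hN]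
      have : 1 ≤ N := by omega
      push_cast [this]
      ring
    rw [nsmul_eq_mul, h3] at h2
    linarith [h1, h2]
  have hbound : ∑ s ∈ C, ∑ t ∈ C, ((s ∩ t).card : ℤ) ≤ N * ((k:ℤ) + ((N:ℤ) - 1) * (k - δ)) := by
    calc ∑ s ∈ C, ∑ t ∈ C, ((s ∩ t).card : ℤ) ≤ ∑ _s ∈ C, ((k:ℤ) + ((N:ℤ) - 1) * (k - δ)) :=
          Finset.sum_le_sum hrow
      _ = N * ((k:ℤ) + ((N:ℤ) - 1) * (k - δ)) := by rw [Finset.sum_const, hN, nsmul_eq_mul]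
  rw [hP, hsum1, hsum2] at hCS
  have hN2' : (2:ℤ) ≤ N := by exact_mod_cast hN2
  have hmul := mul_le_mul_of_nonneg_left hbound (Int.natCast_nonneg n)
  have key : (N:ℤ)^2 * ((k:ℤ)^2 - k*n + δ*n) ≤ N * (δ * n) := by nlinarith [hCS, hmul]
  nlinarith [key, hN2', mul_le_mul_of_nonneg_left (le_refl ((N:ℤ) * ((k:ℤ)^2 - k*n + δ*n))) (le_of_lt (lt_of_lt_of_le two_pos hN2'))]
end

section
/- (Unrestricted Johnson bound, one recursion step) Let A(n,k,2δ) denote the maximum size of a family of k-subsets of an n-set with pairwise symmetric distance at least 2δ, where 1 ≤ δ ≤ k ≤ n. Then k·A(n,k,2δ) ≤ n·A(n−1,k−1,2δ). -/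
/-- `maxCodeSize n k δ` is the maximum size `A(n,k,2δ)` of a family of `k`-subsets of an
`n`-element set whose pairwise symmetric differences have cardinality at least `2δ`. -/
noncomputable def maxCodeSize (n k δ : ℕ) : ℕ :=
  sSup {N | ∃ C : Finset (Finset (Fin n)), C.card = N ∧ (∀ s ∈ C, s.card = k) ∧
    ∀ s ∈ C, ∀ t ∈ C, s ≠ t → 2 * δ ≤ (symmDiff s t).card}

lemma codeSet_bdd (n k δ : ℕ) : BddAbove {N | ∃ C : Finset (Finset (Fin n)),
    C.card = N ∧ (∀ s ∈ C, s.card = k) ∧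
    ∀ s ∈ C, ∀ t ∈ C, s ≠ t → 2 * δ ≤ (symmDiff s t).card} := by
  refine ⟨2 ^ n, fun N hN => ?_⟩
  obtain ⟨C, hC, -, -⟩ := hN
  calc N = C.card := hC.symm
    _ ≤ Fintype.card (Finset (Fin n)) := Finset.card_le_univ C
    _ = 2 ^ n := by simp

lemma codeSet_nonempty (n k δ : ℕ) : Set.Nonempty {N | ∃ C : Finset (Finset (Fin n)),
    C.card = N ∧ (∀ s ∈ C, s.card = k) ∧
    ∀ s ∈ C, ∀ t ∈ C, s ≠ t → 2 * δ ≤ (symmDiff s t).card} :=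
  ⟨0, ∅, by simp⟩

/-- One recursion step of the unrestricted Johnson bound:
`k · A(n,k,2δ) ≤ n · A(n-1,k-1,2δ)`. -/
theorem unrestricted_johnson_step (n k δ : ℕ) (hδ : 1 ≤ δ) (hδk : δ ≤ k) (hkn : k ≤ n) :
    k * maxCodeSize n k δ ≤ n * maxCodeSize (n - 1) (k - 1) δ := by
  obtain ⟨m, rfl⟩ : ∃ m, n = m + 1 :=
    ⟨n - 1, (Nat.succ_pred_eq_of_pos (lt_of_lt_of_le (lt_of_lt_of_le hδ hδk) hkn)).symm⟩
  simp only [Nat.add_sub_cancel]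
  -- extract an optimal code C
  have hmem : maxCodeSize (m + 1) k δ ∈ {N | ∃ C : Finset (Finset (Fin (m + 1))),
      C.card = N ∧ (∀ s ∈ C, s.card = k) ∧
      ∀ s ∈ C, ∀ t ∈ C, s ≠ t → 2 * δ ≤ (symmDiff s t).card} :=
    Nat.sSup_mem (codeSet_nonempty _ _ _) (codeSet_bdd _ _ _)
  obtain ⟨C, hCcard, hCk, hCd⟩ := hmem
  set M := maxCodeSize m (k - 1) δ with hM
  -- for each x, the punctured subcode has size ≤ M
  have key : ∀ x : Fin (m + 1), (C.filter (fun s => x ∈ s)).card ≤ M := by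
    intro x
    set g : Finset (Fin (m + 1)) → Finset (Fin m) :=
      fun s => Finset.univ.filter (fun z => x.succAbove z ∈ s) with hg
    have hgmem : ∀ s (z : Fin m), z ∈ g s ↔ x.succAbove z ∈ s := by
      intro s z; simp [hg]
    have hsymm : ∀ s t, symmDiff (g s) (g t) = g (symmDiff s t) := by
      intro s t
      ext z
      simp only [Finset.mem_symmDiff, hgmem]
    have hcard : ∀ s : Finset (Fin (m + 1)), x ∉ s → (g s).card = s.card := by
      intro s hxs
      rw [← Finset.card_image_of_injective (g s) (Fin.succAbove_right_injective (p := x))]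
      congr 1
      ext y
      simp only [Finset.mem_image, hgmem]
      constructor
      · rintro ⟨z, hz, rfl⟩; exact hz
      · intro hy
        obtain ⟨z, rfl⟩ := Fin.exists_succAbove_eq (x := y) (y := x)
          (by rintro rfl; exact hxs hy)
        exact ⟨z, hy, rfl⟩
    have hginj : Set.InjOn g (C.filter (fun s => x ∈ s)) := by
      intro s hs t ht hgst
      simp only [Finset.coe_filter, Set.mem_setOf_eq] at hs ht
      ext y
      rcases eq_or_ne y x with rfl | hyx
      · simp [hs.2, ht.2]
      · obtain ⟨z, rfl⟩ := Fin.exists_succAbove_eq hyx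
        rw [← hgmem s z, ← hgmem t z, hgst]
    rw [← Finset.card_image_of_injOn hginj]
    refine le_csSup (codeSet_bdd m (k - 1) δ)
      ⟨(C.filter (fun s => x ∈ s)).image g, rfl, ?_, ?_⟩
    · intro u hu
      obtain ⟨s, hs, rfl⟩ := Finset.mem_image.mp hu
      obtain ⟨hsC, hxs⟩ := Finset.mem_filter.mp hs
      have : (g s).card = (s.erase x).card := by
        have := hcard (s.erase x) (Finset.notMem_erase x s)
        rw [← this]
        congr 1
        ext z
        simp only [hgmem, Finset.mem_erase]
        exact ⟨fun h => ⟨Fin.succAbove_ne x z, h⟩, fun h => h.2⟩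
      rw [this, Finset.card_erase_of_mem hxs, hCk s hsC]
    · intro u hu v hv huv
      obtain ⟨s, hs, rfl⟩ := Finset.mem_image.mp hu
      obtain ⟨t, ht, rfl⟩ := Finset.mem_image.mp hv
      obtain ⟨hsC, hxs⟩ := Finset.mem_filter.mp hs
      obtain ⟨htC, hxt⟩ := Finset.mem_filter.mp ht
      have hst : s ≠ t := by rintro rfl; exact huv rfl
      have hxd : x ∉ symmDiff s t := by
        simp [Finset.mem_symmDiff, hxs, hxt]
      calc 2 * δ ≤ (symmDiff s t).card := hCd s hsC t htC hst
        _ = (g (symmDiff s t)).card := (hcard _ hxd).symm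
        _ = (symmDiff (g s) (g t)).card := by rw [hsymm]
  -- double counting
  have hcount : k * C.card = ∑ x : Fin (m + 1), (C.filter (fun s => x ∈ s)).card := by
    simp only [Finset.card_filter]
    rw [Finset.sum_comm]
    have h1 : ∀ s ∈ C, (∑ x : Fin (m + 1), if x ∈ s then 1 else 0) = k := by
      intro s hs
      rw [Finset.sum_ite_mem, Finset.univ_inter, Finset.sum_const, smul_eq_mul, mul_one]
      exact hCk s hs
    rw [Finset.sum_congr rfl h1, Finset.sum_const, smul_eq_mul, mul_comm]
  calc k * maxCodeSize (m + 1) k δ = k * C.card := by rw [hCcard]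
    _ = ∑ x : Fin (m + 1), (C.filter (fun s => x ∈ s)).card := hcount
    _ ≤ ∑ _x : Fin (m + 1), M := Finset.sum_le_sum fun x _ => key x
    _ = (m + 1) * M := by simp [mul_comm]
end

section
/- (Sharpened Johnson counting inequality) Let C be a family of N distinct k-subsets of an n-set with pairwise symmetric distance at least 2δ. Write kN = na + b with integers a ≥ 0 and 0 ≤ b < n. Then n·a·(a−1) + 2ab ≤ (k − δ)·N·(N − 1). -/
/-- Sharpened Johnson counting inequality: for `N` distinct `k`-subsets of an `n`-set with
pairwise symmetric distance at least `2δ`, writing `kN = na + b` with `0 ≤ b < n`, we have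
`n·a·(a-1) + 2ab ≤ (k-δ)·N·(N-1)`. -/
theorem sharpened_johnson_inequality {α : Type*} [DecidableEq α] (P : Finset α)
    (n k δ N a b : ℕ) (hP : P.card = n) (C : Finset (Finset α)) (hN : C.card = N)
    (hsub : ∀ s ∈ C, s ⊆ P) (hk : ∀ s ∈ C, s.card = k) (hδk : δ ≤ k)
    (hdist : ∀ s ∈ C, ∀ t ∈ C, s ≠ t → 2 * δ ≤ (symmDiff s t).card)
    (hab : k * N = n * a + b) (hbn : b < n) :
    n * a * (a - 1) + 2 * a * b ≤ (k - δ) * N * (N - 1) := by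
  classical
  rcases Nat.eq_zero_or_pos a with ha0 | ha
  · subst ha0; simp
  have hN1 : 1 ≤ N := by
    rcases Nat.eq_zero_or_pos N with h0 | h; swap
    · exact h
    exfalso
    rw [h0, mul_zero] at hab
    have hna : n ≤ n * a := Nat.le_mul_of_pos_right n ha
    omega
  set D : α → ℕ := fun x => (C.filter (fun s => x ∈ s)).card with hD
  -- D x as a sum of indicators
  have hDsum : ∀ x, D x = ∑ s ∈ C, (if x ∈ s then 1 else 0) := by
    intro x; exact Finset.card_filter _ _
  have hsum : ∑ x ∈ P, D x = k * N := by
    calc ∑ x ∈ P, D x = ∑ x ∈ P, ∑ s ∈ C, (if x ∈ s then 1 else 0) := by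
          exact Finset.sum_congr rfl fun x _ => hDsum x
      _ = ∑ s ∈ C, ∑ x ∈ P, (if x ∈ s then 1 else 0) := Finset.sum_comm
      _ = ∑ s ∈ C, s.card := by
          refine Finset.sum_congr rfl fun s hs => ?_
          rw [← Finset.card_filter, Finset.filter_mem_eq_inter,
            Finset.inter_eq_right.mpr (hsub s hs)]
      _ = ∑ s ∈ C, k := Finset.sum_congr rfl fun s hs => hk s hs
      _ = k * N := by rw [Finset.sum_const, hN]; ring
  have hsq : ∑ x ∈ P, D x * D x = ∑ s ∈ C, ∑ t ∈ C, (s ∩ t).card := by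
    calc ∑ x ∈ P, D x * D x
        = ∑ x ∈ P, ∑ s ∈ C, ∑ t ∈ C, (if x ∈ s ∩ t then 1 else 0) := by
          refine Finset.sum_congr rfl fun x _ => ?_
          rw [hDsum, Finset.sum_mul_sum]
          refine Finset.sum_congr rfl fun s _ => Finset.sum_congr rfl fun t _ => ?_
          simp [Finset.mem_inter]; split_ifs <;> simp_all
      _ = ∑ s ∈ C, ∑ t ∈ C, ∑ x ∈ P, (if x ∈ s ∩ t then 1 else 0) := by
          rw [Finset.sum_comm]
          exact Finset.sum_congr rfl fun s _ => Finset.sum_comm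
      _ = ∑ s ∈ C, ∑ t ∈ C, (s ∩ t).card := by
          refine Finset.sum_congr rfl fun s hs => Finset.sum_congr rfl fun t _ => ?_
          rw [← Finset.card_filter, Finset.filter_mem_eq_inter, Finset.inter_eq_right.mpr
            ((Finset.inter_subset_left).trans (hsub s hs))]
  -- intersection bound
  have hint : ∀ s ∈ C, ∀ t ∈ C, s ≠ t → (s ∩ t).card ≤ k - δ := by
    intro s hs t ht hne
    have h1 := hdist s hs t ht hne
    have h2 : (symmDiff s t).card = (s \ t).card + (t \ s).card := by
      rw [symmDiff_def]
      exact Finset.card_union_of_disjoint disjoint_sdiff_sdiff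
    have h3 := Finset.card_sdiff_add_card_inter s t
    have h4 := Finset.card_sdiff_add_card_inter t s
    rw [Finset.inter_comm t s] at h4
    rw [hk s hs] at h3
    rw [hk t ht] at h4
    omega
  have hbd : ∑ s ∈ C, ∑ t ∈ C, (s ∩ t).card ≤ (k - δ) * N * (N - 1) + k * N := by
    have : ∀ s ∈ C, ∑ t ∈ C, (s ∩ t).card ≤ (k - δ) * (N - 1) + k := by
      intro s hs
      rw [← Finset.add_sum_erase C _ hs]
      have h1 : ∑ t ∈ (C.erase s), (s ∩ t).card ≤ (C.erase s).card * (k - δ) := by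
        apply Finset.sum_le_card_nsmul
        intro t ht
        exact hint s hs t (Finset.mem_of_mem_erase ht) (fun h => (Finset.ne_of_mem_erase ht) h.symm)
      rw [Finset.card_erase_of_mem hs, hN, Nat.mul_comm] at h1
      have : (s ∩ s).card = k := by rw [Finset.inter_self, hk s hs]
      rw [this]
      omega
    calc ∑ s ∈ C, ∑ t ∈ C, (s ∩ t).card ≤ ∑ s ∈ C, ((k - δ) * (N - 1) + k) :=
          Finset.sum_le_sum this
      _ = N * ((k - δ) * (N - 1) + k) := by rw [Finset.sum_const, hN]; ring
      _ = (k - δ) * N * (N - 1) + k * N := by ring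
  -- convexity lower bound in ℤ
  have hconv : ∀ x ∈ P, (a : ℤ) * (a - 1) + 2 * a * ((D x : ℤ) - a) ≤ (D x : ℤ) * (D x - 1) := by
    intro x _
    have hm : (0 : ℤ) ≤ ((D x : ℤ) - a) * ((D x : ℤ) - a - 1) := by
      rcases le_or_gt 1 ((D x : ℤ) - a) with h | h
      · nlinarith
      · have h2 : (D x : ℤ) - a ≤ 0 := by omega
        nlinarith
    nlinarith
  have hlower : (n : ℤ) * a * (a - 1) + 2 * a * b ≤ ∑ x ∈ P, (D x : ℤ) * (D x - 1) := by
    have h1 : ∑ x ∈ P, ((a : ℤ) * (a - 1) + 2 * a * ((D x : ℤ) - a))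
        ≤ ∑ x ∈ P, (D x : ℤ) * (D x - 1) := Finset.sum_le_sum hconv
    have h2 : ∑ x ∈ P, ((a : ℤ) * (a - 1) + 2 * a * ((D x : ℤ) - a))
        = (n : ℤ) * (a * (a - 1)) + 2 * a * ((k * N : ℤ) - n * a) := by
      rw [Finset.sum_add_distrib, Finset.sum_const, hP, ← Finset.mul_sum,
        Finset.sum_sub_distrib, Finset.sum_const, hP]
      have : ((∑ x ∈ P, (D x : ℤ))) = ((k * N : ℕ) : ℤ) := by
        rw [← Nat.cast_sum, hsum]
      rw [this]; push_cast; ring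
    have hcast : ((k : ℤ) * N) = (n : ℤ) * a + b := by exact_mod_cast hab
    calc (n : ℤ) * a * (a - 1) + 2 * a * b
        = (n : ℤ) * (a * (a - 1)) + 2 * a * ((k * N : ℤ) - n * a) := by
          rw [hcast]; ring
      _ ≤ _ := h2 ▸ h1
  have hupper : ∑ x ∈ P, (D x : ℤ) * (D x - 1) ≤ ((k - δ) * N * (N - 1) : ℕ) := by
    have h1 : ∑ x ∈ P, (D x : ℤ) * (D x - 1)
        = ((∑ x ∈ P, D x * D x : ℕ) : ℤ) - ((∑ x ∈ P, D x : ℕ) : ℤ) := by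
      push_cast
      rw [← Finset.sum_sub_distrib]
      exact Finset.sum_congr rfl fun x _ => by ring
    rw [h1, hsum, hsq]
    have h2 : ((∑ s ∈ C, ∑ t ∈ C, (s ∩ t).card : ℕ) : ℤ)
        ≤ (((k - δ) * N * (N - 1) + k * N : ℕ) : ℤ) := by exact_mod_cast hbd
    push_cast at h2 ⊢
    linarith
  have ha1 : 1 ≤ a := ha
  zify [hδk, hN1, ha1]
  have : ((k - δ) * N * (N - 1) : ℕ) = (((k : ℤ) - δ) * N * (N - 1)) := by
    push_cast [Nat.cast_sub hδk, Nat.cast_sub hN1]; ring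
  rw [this] at hupper
  linarith
end
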